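/- Let O ⊆ ℝ^d be a nonempty open set, let α ∈ (0,1] and s ≥ 1 with α·s ≥ d, and let u : O → ℝ satisfy: |u(x)| ≤ 1 for all x ∈ O; u is α-Hölder with some constant C on O; and ∫_O (1 − u(x)²)^{−s} dx < ∞. Then |u(x)| < 1 for every x ∈ O. -/

import Mathlib

/-!
If `|u x₀| = 1`, then `1 - u² = (1 - |u|)(1 + |u|) ≤ 2 |u x₀ - u| ≤ 2C ‖x - x₀‖ ^ α`, so near `x₀`
the integrand dominates a multiple of `‖x - x₀‖ ^ (-α s) ≥ ‖x - x₀‖ ^ (-d)`. In polar coordinates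
the latter becomes `r ^ (d - 1) * r ^ (-d) = r⁻¹`, which is not integrable at `0`.
-/

open MeasureTheory Metric Module

theorem one_sub_sq_le_two_mul_abs_sub {a b : ℝ} (ha : |a| ≤ 1) (hb : |b| = 1) :
    1 - a ^ 2 ≤ 2 * |b - a| := by
  nlinarith [abs_sub_abs_le_abs_sub b a, sq_abs a, abs_nonneg a]

theorem ENNReal.ofReal_mul_rpow_neg_le_ofReal_rpow_neg {t K ρ α s : ℝ} (hρ : 0 ≤ ρ)
    (hα : 0 ≤ α) (hs : 0 ≤ s) (h : t ≤ K * ρ ^ α) :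
    ENNReal.ofReal K ^ (-s) * ENNReal.ofReal ρ ^ (-(α * s)) ≤ ENNReal.ofReal t ^ (-s) :=
  calc ENNReal.ofReal K ^ (-s) * ENNReal.ofReal ρ ^ (-(α * s))
      = (ENNReal.ofReal K * ENNReal.ofReal ρ ^ α) ^ (-s) := by
        rw [ENNReal.mul_rpow_of_ne_top ENNReal.ofReal_ne_top
          (ENNReal.rpow_ne_top_of_nonneg hα ENNReal.ofReal_ne_top), ← ENNReal.rpow_mul, mul_neg]
    _ = ENNReal.ofReal (K * ρ ^ α) ^ (-s) := by
        rw [ENNReal.ofReal_mul' (Real.rpow_nonneg hρ _), ENNReal.ofReal_rpow_of_nonneg hρ hα]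
    _ ≤ ENNReal.ofReal t ^ (-s) := by
        rw [ENNReal.rpow_neg, ENNReal.rpow_neg]
        exact ENNReal.inv_le_inv.2 (ENNReal.rpow_le_rpow (ENNReal.ofReal_le_ofReal h) hs)

section

variable {E : Type*} [NormedAddCommGroup E] [NormedSpace ℝ E] [FiniteDimensional ℝ E]
  [MeasurableSpace E] [BorelSpace E] (μ : Measure E) [μ.IsAddHaarMeasure]

theorem not_integrableOn_ball_norm_rpow_neg_finrank [Nontrivial E] {r : ℝ} (hr : 0 < r) :
    ¬ IntegrableOn (fun x : E ↦ ‖x‖ ^ (-(finrank ℝ E : ℝ))) (ball 0 r) μ := by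
  rw [integrableOn_fun_norm_addHaar μ (f := fun y ↦ y ^ (-(finrank ℝ E : ℝ))),
    integrableOn_congr_fun (g := fun y : ℝ ↦ y ^ (-1 : ℝ)) _ measurableSet_Ioo,
    intervalIntegral.integrableOn_Ioo_rpow_iff hr]
  · exact lt_irrefl _
  · rintro y ⟨hy, -⟩
    have hd : 1 ≤ finrank ℝ E := finrank_pos
    simp only [smul_eq_mul]
    rw [← Real.rpow_natCast, ← Real.rpow_add hy, Nat.cast_sub hd]
    ring_nf

theorem lintegral_ball_zero_enorm_rpow_neg_eq_top {r p : ℝ} (hr : 0 < r) (hp : 0 < p)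
    (hdp : (finrank ℝ E : ℝ) ≤ p) :
    ∫⁻ x in ball (0 : E) r, ‖x‖ₑ ^ (-p) ∂μ = ⊤ := by
  rcases subsingleton_or_nontrivial E with hE | hE
  · simp [Subsingleton.elim _ (0 : E), ENNReal.zero_rpow_of_neg, hp, (measure_ball_pos μ 0 hr).ne']
  set d : ℝ := (finrank ℝ E : ℝ)
  set ρ := min r 1
  have hρ : 0 < ρ := lt_min hr one_pos
  have h_top : ∫⁻ x in ball (0 : E) ρ, ENNReal.ofReal (‖x‖ ^ (-d)) ∂μ = ⊤ := by
    have h_int := not_integrableOn_ball_norm_rpow_neg_finrank μ hρ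
    rw [IntegrableOn, Integrable, hasFiniteIntegral_iff_ofReal
      (.of_forall fun x ↦ by positivity)] at h_int
    by_contra h
    exact h_int ⟨(measurable_norm.pow_const _).aestronglyMeasurable, lt_top_iff_ne_top.2 h⟩
  have h_pt : ∀ x ∈ ball (0 : E) ρ, ENNReal.ofReal (‖x‖ ^ (-d)) ≤ ‖x‖ₑ ^ (-p) := by
    intro x hx
    rcases eq_or_ne x 0 with rfl | hx0
    · simp [ENNReal.zero_rpow_of_neg, hp]
    calc ENNReal.ofReal (‖x‖ ^ (-d)) = ‖x‖ₑ ^ (-d) := by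
          rw [← ofReal_norm, ENNReal.ofReal_rpow_of_pos (norm_pos_iff.2 hx0)]
      _ ≤ ‖x‖ₑ ^ (-p) := by
          refine ENNReal.rpow_le_rpow_of_exponent_ge ?_ (neg_le_neg hdp)
          rw [← ofReal_norm]
          exact ENNReal.ofReal_le_one.2 ((mem_ball_zero_iff.1 hx).le.trans (min_le_right _ _))
  refine top_le_iff.1 ?_
  calc ⊤ = ∫⁻ x in ball (0 : E) ρ, ENNReal.ofReal (‖x‖ ^ (-d)) ∂μ := h_top.symm
    _ ≤ ∫⁻ x in ball (0 : E) ρ, ‖x‖ₑ ^ (-p) ∂μ := setLIntegral_mono' measurableSet_ball h_pt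
    _ ≤ ∫⁻ x in ball (0 : E) r, ‖x‖ₑ ^ (-p) ∂μ :=
        lintegral_mono_set (ball_subset_ball (min_le_left _ _))

theorem lintegral_ball_edist_rpow_neg_eq_top (x₀ : E) {r p : ℝ} (hr : 0 < r) (hp : 0 < p)
    (hdp : (finrank ℝ E : ℝ) ≤ p) :
    ∫⁻ y in ball x₀ r, edist y x₀ ^ (-p) ∂μ = ⊤ := by
  have hpre : (· - x₀) ⁻¹' ball (0 : E) r = ball x₀ r := by
    ext y; simp [dist_eq_norm]
  calc ∫⁻ y in ball x₀ r, edist y x₀ ^ (-p) ∂μ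
      = ∫⁻ y in (· - x₀) ⁻¹' ball (0 : E) r, ‖y - x₀‖ₑ ^ (-p) ∂μ := by
        simp only [hpre, edist_eq_enorm_sub]
    _ = ∫⁻ x in ball (0 : E) r, ‖x‖ₑ ^ (-p) ∂μ :=
        (measurePreserving_sub_right μ x₀).setLIntegral_comp_preimage_emb
          (measurableEmbedding_subRight x₀) (fun x ↦ ‖x‖ₑ ^ (-p)) _
    _ = ⊤ := lintegral_ball_zero_enorm_rpow_neg_eq_top μ hr hp hdp

theorem lintegral_ball_ofReal_rpow_neg_eq_top_of_le_mul_dist_rpow {f : E → ℝ} (x₀ : E)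
    {r K α s : ℝ} (hr : 0 < r) (hα : 0 < α) (hs : 0 < s) (hdαs : (finrank ℝ E : ℝ) ≤ α * s)
    (hf : ∀ y ∈ ball x₀ r, f y ≤ K * dist y x₀ ^ α) :
    ∫⁻ y in ball x₀ r, ENNReal.ofReal (f y) ^ (-s) ∂μ = ⊤ := by
  have hK : ENNReal.ofReal K ^ (-s) ≠ 0 := by
    rw [Ne, ENNReal.rpow_eq_zero_iff]
    rintro (⟨-, h⟩ | ⟨h, -⟩)
    · linarith
    · exact ENNReal.ofReal_ne_top h
  refine top_le_iff.1 ?_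
  calc ⊤ = ENNReal.ofReal K ^ (-s) * ∫⁻ y in ball x₀ r, edist y x₀ ^ (-(α * s)) ∂μ := by
        rw [lintegral_ball_edist_rpow_neg_eq_top μ x₀ hr (mul_pos hα hs) hdαs, ENNReal.mul_top hK]
    _ ≤ ∫⁻ y in ball x₀ r, ENNReal.ofReal K ^ (-s) * edist y x₀ ^ (-(α * s)) ∂μ :=
        lintegral_const_mul_le _ _
    _ ≤ ∫⁻ y in ball x₀ r, ENNReal.ofReal (f y) ^ (-s) ∂μ := by
        refine setLIntegral_mono' measurableSet_ball fun y hy ↦ ?_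
        rw [edist_dist]
        exact ENNReal.ofReal_mul_rpow_neg_le_ofReal_rpow_neg dist_nonneg hα.le hs.le (hf y hy)

end

theorem stmt_14_general (d : ℕ) (O : Set (EuclideanSpace ℝ (Fin d)))
    (hO : IsOpen O)
    (α s : ℝ) (hα : α ∈ Set.Ioc (0 : ℝ) 1) (hs : 1 ≤ s) (hαs : (d : ℝ) ≤ α * s)
    (u : EuclideanSpace ℝ (Fin d) → ℝ) (C : ℝ)
    (hub : ∀ x ∈ O, |u x| ≤ 1)
    (hHolder : ∀ x ∈ O, ∀ y ∈ O, |u x - u y| ≤ C * ‖x - y‖ ^ α)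
    (hint : ∫⁻ x in O, (ENNReal.ofReal (1 - u x ^ 2)) ^ (-s) < ⊤) :
    ∀ x ∈ O, |u x| < 1 := by
  intro x₀ hx₀
  by_contra! h_ge
  have hx₀_one : |u x₀| = 1 := le_antisymm (hub x₀ hx₀) h_ge
  obtain ⟨r, hr, hball⟩ := isOpen_iff.1 hO x₀ hx₀
  have h_bound : ∀ y ∈ ball x₀ r, 1 - u y ^ 2 ≤ 2 * C * dist y x₀ ^ α := fun y hy ↦
    calc 1 - u y ^ 2 ≤ 2 * |u x₀ - u y| := one_sub_sq_le_two_mul_abs_sub (hub y (hball hy)) hx₀_one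
      _ ≤ 2 * C * dist y x₀ ^ α := by
        rw [dist_comm, dist_eq_norm]; linarith [hHolder x₀ hx₀ y (hball hy)]
  refine hint.ne (top_le_iff.1 ?_)
  calc ⊤ = ∫⁻ y in ball x₀ r, ENNReal.ofReal (1 - u y ^ 2) ^ (-s) :=
        (lintegral_ball_ofReal_rpow_neg_eq_top_of_le_mul_dist_rpow volume x₀ hr hα.1
          (by linarith) (by rwa [finrank_euclideanSpace_fin]) h_bound).symm
    _ ≤ ∫⁻ x in O, ENNReal.ofReal (1 - u x ^ 2) ^ (-s) := lintegral_mono_set hball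

/-- Let `O ⊆ ℝ^d` be a nonempty open set, `α ∈ (0,1]`, `s ≥ 1` with `α s ≥ d`, and let
`u : O → ℝ` satisfy `|u| ≤ 1` on `O`, be `α`-Hölder with some constant `C` on `O`, and have
`∫_O (1 - u²)^{-s} < ∞` (the integrand being `+∞` where `|u| = 1`). Then `|u x| < 1` for
every `x ∈ O`. -/
theorem stmt_14 (d : ℕ) (O : Set (EuclideanSpace ℝ (Fin d)))
    (hO : IsOpen O) (hne : O.Nonempty)
    (α s : ℝ) (hα : α ∈ Set.Ioc (0 : ℝ) 1) (hs : 1 ≤ s) (hαs : (d : ℝ) ≤ α * s)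
    (u : EuclideanSpace ℝ (Fin d) → ℝ) (C : ℝ)
    (hub : ∀ x ∈ O, |u x| ≤ 1)
    (hHolder : ∀ x ∈ O, ∀ y ∈ O, |u x - u y| ≤ C * ‖x - y‖ ^ α)
    (hint : ∫⁻ x in O, (ENNReal.ofReal (1 - u x ^ 2)) ^ (-s) < ⊤) :
    ∀ x ∈ O, |u x| < 1 :=
  stmt_14_general d O hO α s hα hs hαs u C hub hHolder hint
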